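/- arXiv:1702.08389 — 8 statements merged into one kernel-verified Lean document; each statement's English description precedes it below -/
import Mathlib

section
/- Let α : N × M → Finset(Fin C) be a parameter-sharing structure on finite sets N and M, let σ : ℝ → ℝ be any function, and let θ : Fin C → ℝ be any parameter vector. Then for every pair (π_N, π_M) ∈ Aut(α) and every x : N → ℝ, the neural layer φ_θ satisfies π_M • φ_θ(x) = φ_θ(π_N • x). (Forward direction of the main theorem: automorphisms of the parameter-sharing structure are equivariances of the layer.) -/
/-- The neural layer associated to a parameter-sharing structure
`α : N × M → Finset (Fin C)`, parameters `θ : Fin C → ℝ` and nonlinearity `σ`: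
`φ_θ(x)(m) = σ (∑ n, ∑ c ∈ α (n, m), θ c * x n)`. -/
def sharedLayer {N M : Type*} [Fintype N] {C : ℕ}
    (α : N × M → Finset (Fin C)) (σ : ℝ → ℝ) (θ : Fin C → ℝ)
    (x : N → ℝ) (m : M) : ℝ :=
  σ (∑ n, ∑ c ∈ α (n, m), θ c * x n)

/-- if `(π_N, π_M) ∈ Aut(α)`, i.e. `α (n, m) = α (π_N n, π_M m)` for all
`n, m`, then the layer `φ_θ` is equivariant with respect to `(π_N, π_M)`:
`π_M • φ_θ(x) = φ_θ(π_N • x)` for every `x`, where `(π • x) i = x (π i)`. -/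
theorem aut_implies_equivariant {N M : Type*} [Fintype N] [Fintype M] {C : ℕ}
    (α : N × M → Finset (Fin C)) (σ : ℝ → ℝ) (θ : Fin C → ℝ)
    (πN : Equiv.Perm N) (πM : Equiv.Perm M)
    (hAut : ∀ (n : N) (m : M), α (n, m) = α (πN n, πM m)) :
    ∀ (x : N → ℝ) (m : M),
      sharedLayer α σ θ x (πM m) = sharedLayer α σ θ (fun n => x (πN n)) m := by
  intro x m
  unfold sharedLayer
  congr 1
  rw [← Equiv.sum_comp πN (fun n => ∑ c ∈ α (n, πM m), θ c * x n)]
  exact Finset.sum_congr rfl fun n _ => by rw [← hAut]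
end

section
/- Let α : N × M → Finset(Fin C) be a parameter-sharing structure on finite sets N and M and let σ : ℝ → ℝ be strictly monotone. If a pair (π_N, π_M) ∈ Perm(N) × Perm(M) satisfies π_M • φ_θ(x) = φ_θ(π_N • x) for every parameter vector θ : Fin C → ℝ and every x : N → ℝ, then (π_N, π_M) ∈ Aut(α). (Converse direction of the main theorem: every equivariance of the layer holding for all parameter assignments is an automorphism of the parameter-sharing structure.) -/
/-- if `σ` is strictly monotone and the pair `(π_N, π_M)` is an
equivariance of the layer `φ_θ` for *every* parameter vector `θ` (and every input `x`),
then `(π_N, π_M) ∈ Aut(α)`, i.e. `α (n, m) = α (π_N n, π_M m)` for all `n, m`. -/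
theorem equivariant_implies_aut {N M : Type*} [Fintype N] [Fintype M] {C : ℕ}
    (α : N × M → Finset (Fin C)) (σ : ℝ → ℝ)
    (hσ : StrictMono σ ∨ StrictAnti σ)
    (πN : Equiv.Perm N) (πM : Equiv.Perm M)
    (hEq : ∀ (θ : Fin C → ℝ) (x : N → ℝ) (m : M),
      sharedLayer α σ θ x (πM m) = sharedLayer α σ θ (fun n => x (πN n)) m) :
    ∀ (n : N) (m : M), α (n, m) = α (πN n, πM m) := by
  classical
  have hinj : Function.Injective σ := hσ.elim StrictMono.injective StrictAnti.injective
  intro n m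
  have key : ∀ θ : Fin C → ℝ,
      (∑ c ∈ α (πN n, πM m), θ c) = ∑ c ∈ α (n, m), θ c := by
    intro θ
    have h := hinj (hEq θ (fun k => if k = πN n then 1 else 0) m)
    simpa [mul_ite, mul_one, mul_zero, Finset.sum_ite_eq',
      EmbeddingLike.apply_eq_iff_eq] using h
  ext c
  have h := key (fun c' => if c' = c then 1 else 0)
  simp only [Finset.sum_ite_eq', Finset.mem_univ, if_true] at h
  by_cases h1 : c ∈ α (πN n, πM m) <;> by_cases h2 : c ∈ α (n, m) <;>
    simp [h1, h2] at h ⊢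
end

section
/- Let α : N × M → Finset(Fin C) be a parameter-sharing structure on finite sets N and M, and let G be a group with homomorphisms ρ_N : G → Perm(N) and ρ_M : G → Perm(M) such that (ρ_N(g), ρ_M(g)) ∈ Aut(α) for every g ∈ G. Then for any σ : ℝ → ℝ, any θ : Fin C → ℝ, every g ∈ G and every x : N → ℝ, the neural layer satisfies ρ_M(g) • φ_θ(x) = φ_θ(ρ_N(g) • x); that is, φ_θ is G-equivariant. -/
/-- if a group `G` acts on `N` and `M` via `ρ_N`, `ρ_M` and every pair
`(ρ_N g, ρ_M g)` is an automorphism of the parameter-sharing structure `α`, then for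
any `σ`, `θ` the layer `φ_θ` is `G`-equivariant:
`ρ_M(g) • φ_θ(x) = φ_θ(ρ_N(g) • x)` where `(π • x) i = x (π i)`. -/
theorem group_aut_implies_equivariant {N M : Type*} [Fintype N] [Fintype M] {C : ℕ}
    {G : Type*} [Group G]
    (ρN : G →* Equiv.Perm N) (ρM : G →* Equiv.Perm M)
    (α : N × M → Finset (Fin C))
    (hAut : ∀ (g : G) (n : N) (m : M), α (n, m) = α (ρN g n, ρM g m)) :
    ∀ (σ : ℝ → ℝ) (θ : Fin C → ℝ) (g : G) (x : N → ℝ) (m : M),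
      sharedLayer α σ θ x (ρM g m) = sharedLayer α σ θ (fun n => x (ρN g n)) m := by
  intro σ θ g x m
  unfold sharedLayer
  congr 1
  rw [← Equiv.sum_comp (ρN g) (fun n => ∑ c ∈ α (n, ρM g m), θ c * x n)]
  exact Finset.sum_congr rfl fun n _ => by rw [← hAut]
end

section
/- Let α : N × M → Finset(Fin C) be a parameter-sharing structure on finite sets N and M, let θ : Fin C → ℝ, and define the matrix W : M × N → ℝ by W(m, n) = ∑_{c ∈ α(n,m)} θ(c). Then for every (π_N, π_M) ∈ Aut(α): W(π_M(m), π_N(n)) = W(m, n) for all (n, m), and consequently for every x : N → ℝ, π_M • (W x) = W (π_N • x), where (W x)(m) = ∑_{n ∈ N} W(m, n) * x(n) denotes matrix–vector multiplication. -/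
/-- for the weight matrix `W (m, n) = ∑ c ∈ α (n, m), θ c` obtained from a
parameter-sharing structure `α` and parameters `θ`, every `(π_N, π_M) ∈ Aut(α)`
satisfies `W (π_M m, π_N n) = W (m, n)`, and consequently
`π_M • (W x) = W (π_N • x)` for every `x`, where `(W x)(m) = ∑ n, W (m, n) * x n`
and `(π • x) i = x (π i)`. -/
theorem aut_matrix_invariant_and_commutes {N M : Type*} [Fintype N] [Fintype M] {C : ℕ}
    (α : N × M → Finset (Fin C)) (θ : Fin C → ℝ)
    (W : M → N → ℝ) (hW : ∀ (m : M) (n : N), W m n = ∑ c ∈ α (n, m), θ c)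
    (πN : Equiv.Perm N) (πM : Equiv.Perm M)
    (hAut : ∀ (n : N) (m : M), α (n, m) = α (πN n, πM m)) :
    (∀ (n : N) (m : M), W (πM m) (πN n) = W m n) ∧
    (∀ (x : N → ℝ) (m : M), ∑ n, W (πM m) n * x n = ∑ n, W m n * x (πN n)) := by
  have key : ∀ (n : N) (m : M), W (πM m) (πN n) = W m n := by
    intro n m
    rw [hW, hW, ← hAut]
  refine ⟨key, fun x m => ?_⟩
  rw [← Equiv.sum_comp πN (fun n => W (πM m) n * x n)]
  simp only [key]
end

section
/- Let G be a finite group acting on finite sets N and M via homomorphisms ρ_N : G → Perm(N) and ρ_M : G → Perm(M), and let G act diagonally on N × M by g • (n, m) = (ρ_N(g)(n), ρ_M(g)(m)). Let σ : ℝ → ℝ be any function and let θ assign a real parameter to each orbit of the diagonal action. Define the dense-design layer φ_θ : (N → ℝ) → (M → ℝ) by φ_θ(x)(m) = σ(∑_{n ∈ N} θ(orbit(n, m)) * x(n)). Then φ_θ is G-equivariant: for every g ∈ G and every x : N → ℝ, ρ_M(g) • φ_θ(x) = φ_θ(ρ_N(g) • x). -/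
/-- The orbit of `(n, m) ∈ N × M` under the diagonal action of `G`,
`g • (n, m) = (ρ_N g n, ρ_M g m)`. -/
def diagOrbit {N M G : Type*} [Group G]
    (ρN : G →* Equiv.Perm N) (ρM : G →* Equiv.Perm M)
    (n : N) (m : M) : Set (N × M) :=
  Set.range fun g : G => (ρN g n, ρM g m)

/-- The dense-design layer: parameters `θ` are assigned to orbits of the diagonal
`G`-action on `N × M`, and `φ_θ(x)(m) = σ (∑ n, θ (orbit (n, m)) * x n)`. -/
def denseLayer {N M G : Type*} [Fintype N] [Group G]
    (ρN : G →* Equiv.Perm N) (ρM : G →* Equiv.Perm M)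
    (σ : ℝ → ℝ) (θ : Set (N × M) → ℝ) (x : N → ℝ) (m : M) : ℝ :=
  σ (∑ n, θ (diagOrbit ρN ρM n m) * x n)

theorem diagOrbit_smul {N M G : Type*} [Group G]
    (ρN : G →* Equiv.Perm N) (ρM : G →* Equiv.Perm M) (g : G) (n : N) (m : M) :
    diagOrbit ρN ρM (ρN g n) (ρM g m) = diagOrbit ρN ρM n m := by
  unfold diagOrbit
  ext p
  constructor
  · rintro ⟨h, rfl⟩
    exact ⟨h * g, by simp [map_mul, Equiv.Perm.mul_apply]⟩
  · rintro ⟨h, rfl⟩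
    exact ⟨h * g⁻¹, by simp [map_mul, Equiv.Perm.mul_apply]⟩

/-- the dense-design layer is `G`-equivariant:
`ρ_M(g) • φ_θ(x) = φ_θ(ρ_N(g) • x)` for every `g` and `x`, where `(π • x) i = x (π i)`. -/
theorem dense_layer_equivariant {N M G : Type*} [Fintype N] [Fintype M]
    [Group G] [Fintype G]
    (ρN : G →* Equiv.Perm N) (ρM : G →* Equiv.Perm M)
    (σ : ℝ → ℝ) (θ : Set (N × M) → ℝ) :
    ∀ (g : G) (x : N → ℝ) (m : M),
      denseLayer ρN ρM σ θ x (ρM g m) = denseLayer ρN ρM σ θ (fun n => x (ρN g n)) m := by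
  intro g x m
  unfold denseLayer
  congr 1
  rw [← Equiv.sum_comp (ρN g) (fun n => θ (diagOrbit ρN ρM n (ρM g m)) * x n)]
  refine Finset.sum_congr rfl fun n _ => ?_
  rw [diagOrbit_smul]
end

section
/- Let Λ be a directed graph on a finite vertex set N with adjacency matrix B : N × N → ℝ taking values in {0, 1} (B(m, n) = 1 iff there is an edge from n to m), and let I denote the identity matrix. Then for every pair of permutations (π₁, π₂) ∈ Perm(N) × Perm(N), the following are equivalent: (i) for all θ₁, θ₂ ∈ ℝ and all x : N → ℝ, π₂ • ((θ₁·B + θ₂·I) x) = (θ₁·B + θ₂·I)(π₁ • x); (ii) π₁ = π₂ and π₁ is an automorphism of Λ, i.e. B(π₁(m), π₁(n)) = B(m, n) for all m, n ∈ N. (The graph-convolution map x ↦ (θ₁·B + θ₂·I)x is uniquely equivariant to the automorphism group of Λ.) -/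
/-- for a `{0,1}`-valued adjacency matrix `B` of a digraph `Λ` on a
finite vertex set `N` (with `B m n = 1` iff there is an edge from `n` to `m`), a pair
of permutations `(π₁, π₂)` makes the graph-convolution map `x ↦ (θ₁·B + θ₂·I) x`
equivariant for all parameters `θ₁, θ₂` iff `π₁ = π₂` and `π₁` is an automorphism of
`Λ`.  Here `(π • x) i = x (π i)` and `(W x)(m) = ∑ n, W m n * x n`. -/
theorem graph_conv_uniquely_equivariant {N : Type*} [Fintype N] [DecidableEq N]
    (B : N → N → ℝ) (hB : ∀ m n : N, B m n = 0 ∨ B m n = 1)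
    (π₁ π₂ : Equiv.Perm N) :
    (∀ (θ₁ θ₂ : ℝ) (x : N → ℝ) (m : N),
        ∑ n, (θ₁ * B (π₂ m) n + θ₂ * (if π₂ m = n then (1 : ℝ) else 0)) * x n =
          ∑ n, (θ₁ * B m n + θ₂ * (if m = n then (1 : ℝ) else 0)) * x (π₁ n)) ↔
      (π₁ = π₂ ∧ ∀ m n : N, B (π₁ m) (π₁ n) = B m n) := by
  constructor
  · intro h
    have hπ : π₁ = π₂ := by
      ext m
      symm
      have h1 := h 0 1 (fun n => if n = π₁ m then 1 else 0) m
      simp only [zero_mul, zero_add, one_mul, ite_mul, zero_mul, mul_ite, mul_one, mul_zero,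
        Finset.sum_ite_eq, Finset.mem_univ, if_true, EmbeddingLike.apply_eq_iff_eq] at h1
      simpa using h1
    subst hπ
    refine ⟨rfl, fun m k => ?_⟩
    have h2 := h 1 0 (fun n => if n = π₁ k then 1 else 0) m
    simp only [one_mul, zero_mul, add_zero, mul_ite, mul_one, mul_zero, ite_self] at h2
    rw [Finset.sum_ite_eq' (Finset.univ) (π₁ k)] at h2
    simp only [Finset.mem_univ, if_true] at h2
    rw [h2, Finset.sum_eq_single k]
    · simp
    · intro n _ hn
      simp [π₁.injective.ne hn]
    · simp
  · rintro ⟨rfl, hauto⟩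
    intro θ₁ θ₂ x m
    rw [← Equiv.sum_comp π₁ (fun n => (θ₁ * B (π₁ m) n + θ₂ * (if π₁ m = n then (1 : ℝ) else 0)) * x n)]
    refine Finset.sum_congr rfl fun n _ => ?_
    rw [hauto]
    congr 2
    simp [Equiv.apply_eq_iff_eq]
end

section
/- Let N be a finite set and σ : ℝ → ℝ strictly monotone. For parameters θ₁, θ₂ ∈ ℝ define the permutation-equivariant layer φ_{θ₁,θ₂} : (N → ℝ) → (N → ℝ) by φ_{θ₁,θ₂}(x)(m) = σ(θ₁ * x(m) + θ₂ * ∑_{n ∈ N} x(n)). Then for every pair (π₁, π₂) ∈ Perm(N) × Perm(N), the following are equivalent: (i) for all θ₁, θ₂ ∈ ℝ and all x : N → ℝ, π₂ • φ_{θ₁,θ₂}(x) = φ_{θ₁,θ₂}(π₁ • x); (ii) π₁ = π₂. In particular, the layer is equivariant to all simultaneous permutations of input and output, and to no other pairs of permutations. -/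
/-- the permutation-equivariant layer
`φ_{θ₁,θ₂}(x)(m) = σ (θ₁ * x m + θ₂ * ∑ n, x n)` with strictly monotone `σ`
satisfies, for every pair `(π₁, π₂) ∈ Perm(N) × Perm(N)`:
`π₂ • φ_{θ₁,θ₂}(x) = φ_{θ₁,θ₂}(π₁ • x)` for all `θ₁, θ₂, x` iff `π₁ = π₂`.
Here `(π • x) i = x (π i)`. -/
theorem perm_equivariant_layer_unique {N : Type*} [Fintype N]
    (σ : ℝ → ℝ) (hσ : StrictMono σ ∨ StrictAnti σ)
    (π₁ π₂ : Equiv.Perm N) :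
    (∀ (θ₁ θ₂ : ℝ) (x : N → ℝ) (m : N),
        σ (θ₁ * x (π₂ m) + θ₂ * ∑ n, x n) =
          σ (θ₁ * x (π₁ m) + θ₂ * ∑ n, x (π₁ n))) ↔
      π₁ = π₂ := by
  have hinj : Function.Injective σ := hσ.elim StrictMono.injective StrictAnti.injective
  constructor
  · intro h
    ext m
    classical
    have := h 1 0 (fun n => if n = π₁ m then (1:ℝ) else 0) m
    simp only [one_mul, zero_mul, add_zero] at this
    have := hinj this
    simp at this
    exact this.symm
  · rintro rfl
    intro θ₁ θ₂ x m
    rw [Equiv.sum_comp π₁ x]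
end

section
/- Let N be a finite set and let G ≤ Perm(N) be a permutation group acting semi-regularly (freely) on N, i.e. every non-identity element of G has no fixed point in N. If a permutation τ ∈ Perm(N) preserves every orbit of the diagonal G-action on N × N — that is, for all (n, n') ∈ N × N, the pair (τ(n), τ(n')) lies in the same orbit as (n, n') under the action g • (n, n') = (g(n), g(n')) — then τ ∈ G. (Semi-regular permutation groups are 2-closed.) -/
/-- semi-regular permutation groups are 2-closed.  If `G ≤ Perm(N)` acts
semi-regularly (freely) on a finite set `N` and a permutation `τ` preserves every
orbit of the diagonal `G`-action on `N × N` — i.e. for all `(n, n')`, the pair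
`(τ n, τ n')` lies in the `G`-orbit of `(n, n')` — then `τ ∈ G`. -/
theorem semiregular_two_closed {N : Type*} [Fintype N]
    (G : Subgroup (Equiv.Perm N))
    (hfree : ∀ g ∈ G, g ≠ 1 → ∀ n : N, g n ≠ n)
    (τ : Equiv.Perm N)
    (hτ : ∀ n n' : N, ∃ g ∈ G, ((g n, g n') : N × N) = (τ n, τ n')) :
    τ ∈ G := by
  by_cases hN : Nonempty N
  · obtain ⟨n₀⟩ := hN
    obtain ⟨g, hg, hg0⟩ := hτ n₀ n₀
    have key : ∀ n : N, g n = τ n := by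
      intro n
      obtain ⟨h, hh, hpair⟩ := hτ n₀ n
      have h1 : h n₀ = τ n₀ := congrArg Prod.fst hpair
      have h2 : h n = τ n := congrArg Prod.snd hpair
      have hg1 : g n₀ = τ n₀ := congrArg Prod.fst hg0
      have : g⁻¹ * h ∈ G := G.mul_mem (G.inv_mem hg) hh
      by_cases heq : g⁻¹ * h = 1
      · have : h = g := by
          have := congrArg (g * ·) heq
          simpa [mul_assoc] using this
        rw [← h2, this]
      · exact absurd (show (g⁻¹ * h) n₀ = n₀ by
          simp [Equiv.Perm.mul_apply, h1, ← hg1]) (hfree _ ‹g⁻¹ * h ∈ G› heq n₀)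
    have : τ = g := by ext n; exact (key n).symm
    rwa [this]
  · have : τ = 1 := by ext n; exact absurd ⟨n⟩ hN
    rw [this]; exact G.one_mem
end
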